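/- arXiv:2402.05343 — 3 statements merged into one kernel-verified Lean document; each statement's English description precedes it below -/
import Mathlib

section
/- Let 𝓡 be a reaction network on d species and suppose R = (y*_1 → y*_2, …, y*_M → y*_1) is a strong tier-1 cycle along a tier sequence {x_n}. Let {x̄_n} ⊆ ℤ^d_{≥0} be a sequence with sup_n ‖x_n − x̄_n‖_∞ < ∞ and (x̄_n)_i = (x_n)_i for every n and every i ∉ I_{x_n}. Then there is a subsequence {x̄_{n_k}} of {x̄_n} that is a tier sequence of 𝓡 and along which R is a strong tier-1 cycle. -/
open Filter Finset

/-! On the coordinates where `x n → ∞` the perturbation `xb n - x n` is bounded, so once `x n` is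
large, every intensity `λ_y` at a shifted point `xb n + s` lies within the factor `4 ^ ∑ y_i` of
`λ_y (x n + s)`, and conversely; on the other coordinates nothing changes. Hence the limits that
make `R` a strong tier-1 cycle along `x` persist along `xb`. A tier sequence is then extracted
in two steps: Dickson's lemma gives a coordinatewise monotone subsequence, and compactness of
`[0, ∞]` a further one along which all ratios `λ_y / λ_y'` converge. -/

/-- A reaction network on `d` species: every reaction has a nonnegative source complex and
a nonnegative product complex, and the source differs from the product. -/
def IsRN (d : ℕ) (Rn : Finset ((Fin d → ℤ) × (Fin d → ℤ))) : Prop :=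
  ∀ r ∈ Rn, (∀ i, 0 ≤ r.1 i) ∧ (∀ i, 0 ≤ r.2 i) ∧ r.1 ≠ r.2

/-- Mass-action intensity `λ_y(x) = ∏ i, x_i!/(x_i - y_i)!` if `x ≥ y` componentwise, else `0`. -/
def intensity (d : ℕ) (y x : Fin d → ℤ) : ℕ :=
  if ∀ i, y i ≤ x i then ∏ i : Fin d, Nat.descFactorial (x i).toNat ((y i).toNat) else 0

/-- Cyclic successor on `{1, …, M}`: `cyc M m = m + 1` for `m < M` and `cyc M M = 1`. -/
def cyc (M m : ℕ) : ℕ := if m = M then 1 else m + 1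

/-- `xshift d ystar x m n = x^m_n = x_n + ∑_{j=1}^{m-1} (y*_{j+1} - y*_j)`. -/
def xshift (d : ℕ) (ystar : ℕ → Fin d → ℤ) (x : ℕ → Fin d → ℤ) (m n : ℕ) : Fin d → ℤ :=
  fun i => x n i + ∑ j ∈ Finset.Ico 1 m, (ystar (j + 1) i - ystar j i)

/-- The ordered list `(y*_1 → y*_2, …, y*_M → y*_1)` consists of reactions of the network. -/
def IsCycleIn (d : ℕ) (Rn : Finset ((Fin d → ℤ) × (Fin d → ℤ))) (M : ℕ)
    (ystar : ℕ → Fin d → ℤ) : Prop :=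
  ∀ m, 1 ≤ m → m ≤ M → (ystar m, ystar (cyc M m)) ∈ Rn

/-- Condition (ii) of a strong tier-1 cycle, with explicit witness `m0`. -/
def TierLimits (d : ℕ) (Rn : Finset ((Fin d → ℤ) × (Fin d → ℤ))) (M : ℕ)
    (ystar : ℕ → Fin d → ℤ) (x : ℕ → Fin d → ℤ) (m0 : ℕ) : Prop :=
  ∀ m, 1 ≤ m → m ≤ M → ∀ y y' : Fin d → ℤ, (y, y') ∈ Rn →
    (y, y') ≠ (ystar m, ystar (cyc M m)) →
    Tendsto (fun n =>
        ((intensity d (ystar m0) (xshift d ystar x m0 n) : ℝ) *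
          (intensity d y (xshift d ystar x m n) : ℝ)) /
          (intensity d (ystar m) (xshift d ystar x m n) : ℝ))
      atTop (nhds 0)

/-- `R = (y*_1 → y*_2, …, y*_M → y*_1)` is a strong tier-1 cycle along `x`. -/
def IsStrongT1Cycle (d : ℕ) (Rn : Finset ((Fin d → ℤ) × (Fin d → ℤ))) (M : ℕ)
    (ystar : ℕ → Fin d → ℤ) (x : ℕ → Fin d → ℤ) : Prop :=
  IsCycleIn d Rn M ystar ∧
  (∀ n, 0 < intensity d (ystar 1) (x n)) ∧
  ∃ m0, 1 ≤ m0 ∧ m0 ≤ M ∧ TierLimits d Rn M ystar x m0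

/-- `y` is a source complex of the network. -/
def IsSourceIn (d : ℕ) (Rn : Finset ((Fin d → ℤ) × (Fin d → ℤ))) (y : Fin d → ℤ) : Prop :=
  ∃ y', (y, y') ∈ Rn

/-- `y` is a complex (source or product) of the network. -/
def ComplexOf (d : ℕ) (Rn : Finset ((Fin d → ℤ) × (Fin d → ℤ))) (y : Fin d → ℤ) : Prop :=
  ∃ r ∈ Rn, r.1 = y ∨ r.2 = y

/-- Tier sequence of a reaction network. -/
def IsTierSeq (d : ℕ) (Rn : Finset ((Fin d → ℤ) × (Fin d → ℤ)))
    (x : ℕ → Fin d → ℤ) : Prop :=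
  (∀ n i, 0 ≤ x n i) ∧
  (∃ i, Tendsto (fun n => x n i) atTop atTop) ∧
  (∀ i, (Tendsto (fun n => x n i) atTop atTop ∧ Monotone fun n => x n i) ∨
      (∃ c : ℤ, ∀ n, x n i = c)) ∧
  (∀ y y' : Fin d → ℤ, IsSourceIn d Rn y → IsSourceIn d Rn y' →
    (Tendsto (fun n => (intensity d y (x n) : ℝ) / (intensity d y' (x n) : ℝ)) atTop atTop ∨
      ∃ c : ℝ, Tendsto (fun n => (intensity d y (x n) : ℝ) / (intensity d y' (x n) : ℝ))
        atTop (nhds c)))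

/-- One reaction step: some reaction `y → y'` with `y ≤ a` fires, giving `b = a + y' - y`. -/
def ReactStep (d : ℕ) (Rn : Finset ((Fin d → ℤ) × (Fin d → ℤ)))
    (a b : Fin d → ℤ) : Prop :=
  ∃ r ∈ Rn, (∀ i, r.1 i ≤ a i) ∧ b = fun i => a i + (r.2 i - r.1 i)

/-- `w` is reachable from `z` by finitely many reaction steps. -/
def Reachable (d : ℕ) (Rn : Finset ((Fin d → ℤ) × (Fin d → ℤ)))
    (z w : Fin d → ℤ) : Prop :=
  Relation.ReflTransGen (ReactStep d Rn) z w

/-- Weak reversibility: every reaction lies on a directed cycle of reactions. -/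
def WeaklyReversible (d : ℕ) (Rn : Finset ((Fin d → ℤ) × (Fin d → ℤ))) : Prop :=
  ∀ r ∈ Rn, ∃ (K : ℕ) (ys : ℕ → Fin d → ℤ), 2 ≤ K ∧
    ys 1 = r.1 ∧ ys 2 = r.2 ∧
    (∀ j, 1 ≤ j → j < K → (ys j, ys (j + 1)) ∈ Rn) ∧
    (ys K, ys 1) ∈ Rn

lemma Nat.descFactorial_le_four_pow_mul {n n' k : ℕ} (hn' : n' ≤ 2 * n) (hk : 2 * k ≤ n) :
    n'.descFactorial k ≤ 4 ^ k * n.descFactorial k :=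
  calc n'.descFactorial k ≤ n' ^ k := Nat.descFactorial_le_pow _ _
    _ ≤ (4 * (n + 1 - k)) ^ k := Nat.pow_le_pow_left (by omega) k
    _ = 4 ^ k * (n + 1 - k) ^ k := mul_pow _ _ _
    _ ≤ 4 ^ k * n.descFactorial k := Nat.mul_le_mul_left _ (Nat.pow_sub_le_descFactorial n k)

lemma intensity_le_of_forall {d : ℕ} {y a b : Fin d → ℤ}
    (h : ∀ i, b i = a i ∨ (2 * (y i).toNat ≤ a i ∧ b i ≤ 2 * a i)) :
    intensity d y b ≤ (∏ i, 4 ^ (y i).toNat) * intensity d y a := by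
  unfold intensity
  split_ifs with hb ha
  · rw [← prod_mul_distrib]
    refine prod_le_prod' fun i _ => ?_
    rcases h i with h | ⟨h₁, h₂⟩
    · rw [h]
      exact Nat.le_mul_of_pos_left _ (by positivity)
    · exact Nat.descFactorial_le_four_pow_mul (by omega) (by omega)
  · refine absurd (fun i => ?_) ha
    rcases h i with h | ⟨h₁, -⟩
    · exact h ▸ hb i
    · omega
  all_goals exact Nat.zero_le _

lemma mul_div_le_mul_div_of_le {a b e a' b' e' c₀ c₁ c₂ c₃ : ℕ} (ha : a' ≤ c₀ * a)
    (hb : b' ≤ c₁ * b) (he : e ≤ c₂ * e') (he' : e' ≤ c₃ * e) :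
    (a' * b' : ℝ) / e' ≤ c₀ * c₁ * c₂ * (a * b / e) := by
  rcases Nat.eq_zero_or_pos e' with rfl | he'₀
  · simp only [Nat.cast_zero, div_zero]
    positivity
  have he₀ : (0 : ℝ) < e :=
    Nat.cast_pos.2 (Nat.pos_of_ne_zero fun h => by simp [h] at he'; omega)
  have ha' : (a' : ℝ) ≤ c₀ * a := by exact_mod_cast ha
  have hb' : (b' : ℝ) ≤ c₁ * b := by exact_mod_cast hb
  have he'' : (e : ℝ) ≤ c₂ * e' := by exact_mod_cast he
  rw [div_le_iff₀ (by exact_mod_cast he'₀)]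
  calc (a' * b' : ℝ) ≤ c₀ * a * (c₁ * b) := by gcongr
    _ = c₀ * c₁ * (a * b / e) * e := by field_simp
    _ ≤ c₀ * c₁ * (a * b / e) * (c₂ * e') := by gcongr
    _ = c₀ * c₁ * c₂ * (a * b / e) * e' := by ring

lemma TierLimits.comp {d M m₀ : ℕ} {Rn : Finset ((Fin d → ℤ) × (Fin d → ℤ))}
    {ystar : ℕ → Fin d → ℤ} {x : ℕ → Fin d → ℤ} (h : TierLimits d Rn M ystar x m₀)
    {φ : ℕ → ℕ} (hφ : Tendsto φ atTop atTop) : TierLimits d Rn M ystar (fun k => x (φ k)) m₀ :=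
  fun m hm₁ hmM y y' hy hne => (h m hm₁ hmM y y' hy hne).comp hφ

section Perturbation

variable {d : ℕ}

def IsBoundedPerturbation (u v : ℕ → Fin d → ℤ) : Prop :=
  (∃ B, ∀ n i, |u n i - v n i| ≤ B) ∧
    ∀ i, (∀ n, v n i = u n i) ∨ Tendsto (fun n => u n i) atTop atTop

namespace IsBoundedPerturbation

variable {u v : ℕ → Fin d → ℤ}

lemma tendsto_atTop (h : IsBoundedPerturbation u v) {i : Fin d}
    (hi : Tendsto (fun n => u n i) atTop atTop) : Tendsto (fun n => v n i) atTop atTop := by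
  obtain ⟨B, hB⟩ := h.1
  refine tendsto_atTop_mono (fun n => ?_) (tendsto_atTop_add_const_right atTop (-B) hi)
  linarith [(abs_le.1 (hB n i)).2]

lemma symm (h : IsBoundedPerturbation u v) : IsBoundedPerturbation v u := by
  obtain ⟨B, hB⟩ := h.1
  refine ⟨⟨B, fun n i => abs_sub_comm (u n i) (v n i) ▸ hB n i⟩, fun i => ?_⟩
  rcases h.2 i with heq | hi
  · exact Or.inl fun n => (heq n).symm
  · exact Or.inr (h.tendsto_atTop hi)

lemma eventually_intensity_le (h : IsBoundedPerturbation u v) (y s : Fin d → ℤ) :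
    ∀ᶠ n in atTop, intensity d y (fun i => v n i + s i) ≤
      (∏ i, 4 ^ (y i).toNat) * intensity d y (fun i => u n i + s i) := by
  obtain ⟨⟨B, hB⟩, hI⟩ := h
  have hclose : ∀ i, ∀ᶠ n in atTop, v n i + s i = u n i + s i ∨
      (2 * (y i).toNat ≤ u n i + s i ∧ v n i + s i ≤ 2 * (u n i + s i)) := by
    intro i
    rcases hI i with heq | hi
    · exact Eventually.of_forall fun n => Or.inl (by rw [heq n])
    · filter_upwards [hi.eventually_ge_atTop (2 * (y i).toNat + B - s i)] with n hn
      obtain ⟨hlo, hhi⟩ := abs_le.1 (hB n i)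
      have hB₀ : 0 ≤ B := (abs_nonneg _).trans (hB n i)
      right
      constructor <;> omega
  filter_upwards [eventually_all.2 hclose] with n hn
  exact intensity_le_of_forall hn

lemma eventually_intensity_pos (h : IsBoundedPerturbation u v) {y : Fin d → ℤ}
    (hu : ∀ n, 0 < intensity d y (u n)) : ∀ᶠ n in atTop, 0 < intensity d y (v n) := by
  filter_upwards [h.symm.eventually_intensity_le y 0] with n hn
  simp only [Pi.zero_apply, add_zero] at hn
  exact Nat.pos_of_mul_pos_left ((hu n).trans_le hn)

lemma tierLimits (h : IsBoundedPerturbation u v) {M m₀ : ℕ}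
    {Rn : Finset ((Fin d → ℤ) × (Fin d → ℤ))} {ystar : ℕ → Fin d → ℤ}
    (hu : TierLimits d Rn M ystar u m₀) : TierLimits d Rn M ystar v m₀ := by
  intro m hm₁ hmM y y' hy hne
  let s : ℕ → Fin d → ℤ := fun m i => ∑ j ∈ Ico 1 m, (ystar (j + 1) i - ystar j i)
  let c : (Fin d → ℤ) → ℝ := fun z => ((∏ i, 4 ^ (z i).toNat : ℕ) : ℝ)
  refine squeeze_zero' (Eventually.of_forall fun n => by positivity) ?_
    (by simpa using (hu m hm₁ hmM y y' hy hne).const_mul (c (ystar m₀) * c y * c (ystar m)))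
  filter_upwards [h.eventually_intensity_le (ystar m₀) (s m₀), h.eventually_intensity_le y (s m),
    h.symm.eventually_intensity_le (ystar m) (s m), h.eventually_intensity_le (ystar m) (s m)]
    with n h₀ h₁ h₂ h₃
  exact mul_div_le_mul_div_of_le h₀ h₁ h₂ h₃

end IsBoundedPerturbation

end Perturbation

lemma exists_strictMono_monotone_of_nonneg {ι : Type*} [Finite ι] (u : ℕ → ι → ℤ)
    (hu : ∀ n i, 0 ≤ u n i) : ∃ φ : ℕ → ℕ, StrictMono φ ∧ ∀ i, Monotone fun k => u (φ k) i := by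
  obtain ⟨g, hg⟩ := wellQuasiOrdered_le.exists_monotone_subseq fun n i => (u n i).toNat
  refine ⟨g, g.strictMono, fun i m n hmn => ?_⟩
  have hle : (u (g m) i).toNat ≤ (u (g n) i).toNat := hg m n hmn i
  have hn := hu (g n) i
  show u (g m) i ≤ u (g n) i
  omega

lemma exists_strictMono_tendsto_atTop_or_tendsto_nhds {ι : Type*} [Finite ι] (f : ι → ℕ → ℝ)
    (hf : ∀ i n, 0 ≤ f i n) : ∃ φ : ℕ → ℕ, StrictMono φ ∧ ∀ i,
      Tendsto (fun k => f i (φ k)) atTop atTop ∨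
        ∃ c, Tendsto (fun k => f i (φ k)) atTop (nhds c) := by
  obtain ⟨L, φ, hφ, hL⟩ := CompactSpace.tendsto_subseq fun n i => ENNReal.ofReal (f i n)
  refine ⟨φ, hφ, fun i => ?_⟩
  have hLi : Tendsto (fun k => ENNReal.ofReal (f i (φ k))) atTop (nhds (L i)) :=
    tendsto_pi_nhds.1 hL i
  by_cases htop : L i = ⊤
  · exact Or.inl (ENNReal.tendsto_ofReal_nhds_top.1 (htop ▸ hLi))
  · refine Or.inr ⟨(L i).toReal, ((ENNReal.tendsto_toReal htop).comp hLi).congr fun k => ?_⟩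
    exact ENNReal.toReal_ofReal (hf i (φ k))

theorem stmt11_general {d M : ℕ}
    (Rn : Finset ((Fin d → ℤ) × (Fin d → ℤ)))
    (ystar : ℕ → Fin d → ℤ) (x : ℕ → Fin d → ℤ)
    (htier : IsTierSeq d Rn x)
    (hcycle : IsStrongT1Cycle d Rn M ystar x)
    (xb : ℕ → Fin d → ℤ) (hxb0 : ∀ n i, 0 ≤ xb n i)
    (hbd : ∃ B : ℤ, ∀ n i, |x n i - xb n i| ≤ B)
    (heq : ∀ n i, ¬ Tendsto (fun n => x n i) atTop atTop → xb n i = x n i) :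
    ∃ φ : ℕ → ℕ, StrictMono φ ∧
      IsTierSeq d Rn (fun k => xb (φ k)) ∧
      IsStrongT1Cycle d Rn M ystar (fun k => xb (φ k)) := by
  obtain ⟨-, ⟨i₀, hi₀⟩, hcoord, -⟩ := htier
  obtain ⟨hcyc, hpos, m₀, hm₀, hm₀M, hlim⟩ := hcycle
  have hpert : IsBoundedPerturbation x xb := ⟨hbd, fun i => (em' _).imp (fun hi n => heq n i hi) id⟩
  obtain ⟨N, hN⟩ := eventually_atTop.1 (hpert.eventually_intensity_pos hpos)
  obtain ⟨φ₁, hφ₁, hmono⟩ :=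
    exists_strictMono_monotone_of_nonneg (fun n => xb (n + N)) fun n => hxb0 (n + N)
  obtain ⟨φ₂, hφ₂, hratio⟩ := exists_strictMono_tendsto_atTop_or_tendsto_nhds (ι := Rn × Rn)
    (fun p n => (intensity d p.1.1.1 (xb (φ₁ n + N)) : ℝ) / intensity d p.2.1.1 (xb (φ₁ n + N)))
    fun _ _ => by positivity
  have hφ : StrictMono fun k => φ₁ (φ₂ k) + N := fun a b hab => by
    simpa using hφ₁ (hφ₂ hab)
  refine ⟨_, hφ, ⟨fun k => hxb0 _, ⟨i₀, (hpert.tendsto_atTop hi₀).comp hφ.tendsto_atTop⟩,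
    fun i => ?_, ?_⟩, hcyc, fun k => hN _ (Nat.le_add_left _ _), m₀, hm₀, hm₀M,
    (hpert.tierLimits hlim).comp hφ.tendsto_atTop⟩
  · by_cases hi : Tendsto (fun n => x n i) atTop atTop
    · exact Or.inl ⟨(hpert.tendsto_atTop hi).comp hφ.tendsto_atTop, (hmono i).comp hφ₂.monotone⟩
    · obtain ⟨c, hc⟩ := (hcoord i).resolve_left (hi ·.1)
      exact Or.inr ⟨c, fun k => (heq _ i hi).trans (hc _)⟩
  · rintro y y' ⟨z, hz⟩ ⟨z', hz'⟩
    exact hratio (⟨(y, z), hz⟩, ⟨(y', z'), hz'⟩)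

/-- Perturbation lemma: a bounded perturbation of a tier sequence (agreeing on the bounded
coordinates) has a subsequence that is again a tier sequence along which `R` is a strong
tier-1 cycle. -/
theorem stmt11 {d M : ℕ} (hd : 1 ≤ d) (hM : 1 ≤ M)
    (Rn : Finset ((Fin d → ℤ) × (Fin d → ℤ))) (hRn : IsRN d Rn)
    (ystar : ℕ → Fin d → ℤ) (x : ℕ → Fin d → ℤ)
    (htier : IsTierSeq d Rn x)
    (hcycle : IsStrongT1Cycle d Rn M ystar x)
    (xb : ℕ → Fin d → ℤ) (hxb0 : ∀ n i, 0 ≤ xb n i)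
    (hbd : ∃ B : ℤ, ∀ n i, |x n i - xb n i| ≤ B)
    (heq : ∀ n i, ¬ Tendsto (fun n => x n i) atTop atTop → xb n i = x n i) :
    ∃ φ : ℕ → ℕ, StrictMono φ ∧
      IsTierSeq d Rn (fun k => xb (φ k)) ∧
      IsStrongT1Cycle d Rn M ystar (fun k => xb (φ k)) :=
  stmt11_general Rn ystar x htier hcycle xb hxb0 hbd heq
end

section
/- Let 𝓡 be a weakly reversible reaction network on d species. Let z ∈ ℤ^d_{≥0} and suppose z + w is reachable from z for some w ∈ ℤ^d_{≥0} with (w)_i > 0 for every i. Then for any choice of nonnegative integers d^{y→y'} (one for each reaction y → y' ∈ 𝓡) satisfying Σ_{y→y' ∈ 𝓡} d^{y→y'}(y' − y) ≥ 0 componentwise, the state z + Σ_{y→y' ∈ 𝓡} d^{y→y'}(y' − y) is reachable from z. -/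
open Filter Finset

/-!
Weak reversibility makes reachability symmetric: a reaction `y → y'` fired from `a` can be
undone by running once around a cycle through `y → y'`, which needs no more than `a ≥ y`.
Iterating the path `z ⇝ z + w` lifts `z` to a state `u = z + n • w` dominating the sources of
all the reactions to be fired, so from `u` one can fire them in any order and reach
`u + v`, `v` the prescribed net change. Translating `z ⇝ u` by `v ≥ 0` and reversing it gives
`u + v ⇝ z + v`.
-/

theorem exists_list_sum_map_eq_sum_nsmul {α M : Type*} [AddCommMonoid M] (s : Finset α)
    (c : α → ℕ) (f : α → M) :
    ∃ L : List α, (∀ a ∈ L, a ∈ s) ∧ (L.map f).sum = ∑ a ∈ s, c a • f a := by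
  refine ⟨s.toList.flatMap fun a => List.replicate (c a) a, ?_, ?_⟩
  · intro a ha
    obtain ⟨b, hb, hab⟩ := List.mem_flatMap.1 ha
    rw [List.eq_of_mem_replicate hab]
    exact Finset.mem_toList.1 hb
  · simp [List.flatMap, List.sum_flatten, Function.comp_def]

theorem exists_le_add_nsmul {ι α : Type*} [Finite ι] [AddCommGroup α] [LinearOrder α]
    [IsOrderedAddMonoid α] [Archimedean α] (s z w : ι → α) (hw : ∀ i, 0 < w i) :
    ∃ n : ℕ, s ≤ z + n • w :=
  (eventually_all.2 fun i => (tendsto_atTop_add_const_left atTop (z i)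
    (tendsto_id.atTop_nsmul_const (hw i))).eventually_ge_atTop (s i)).exists

section Reachability

variable {d : ℕ} {Rn : Finset ((Fin d → ℤ) × (Fin d → ℤ))}

theorem reactStep_of_mem {r : (Fin d → ℤ) × (Fin d → ℤ)} (hr : r ∈ Rn) {a : Fin d → ℤ}
    (ha : r.1 ≤ a) : ReactStep d Rn a (a + (r.2 - r.1)) :=
  ⟨r, hr, ha, rfl⟩

theorem reactStep_add_of_mem {y y' b : Fin d → ℤ} (h : (y, y') ∈ Rn) (hb : 0 ≤ b) :
    ReactStep d Rn (b + y) (b + y') := by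
  simpa using reactStep_of_mem h (le_add_of_nonneg_left hb)

theorem ReactStep.add_right {a b v : Fin d → ℤ} (h : ReactStep d Rn a b) (hv : 0 ≤ v) :
    ReactStep d Rn (a + v) (b + v) := by
  obtain ⟨r, hr, hle, rfl⟩ := h
  convert reactStep_of_mem hr (le_add_of_le_of_nonneg hle hv) using 1
  ext i
  simp only [Pi.add_apply, Pi.sub_apply]
  ring

theorem Reachable.add_right {a b v : Fin d → ℤ} (h : Reachable d Rn a b) (hv : 0 ≤ v) :
    Reachable d Rn (a + v) (b + v) :=
  Relation.ReflTransGen.lift (· + v) (fun _ _ hs => ReactStep.add_right hs hv) _ _ h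

theorem Reachable.add_nsmul {z w : Fin d → ℤ} (h : Reachable d Rn z (z + w)) (hw : 0 ≤ w)
    (n : ℕ) : Reachable d Rn z (z + n • w) := by
  induction n with
  | zero => rw [zero_nsmul, add_zero]; exact .refl
  | succ n ih =>
    have hstep := h.add_right (nsmul_nonneg hw n)
    rw [add_right_comm] at hstep
    rw [succ_nsmul, ← add_assoc]
    exact ih.trans hstep

theorem reachable_add_chain {K : ℕ} {ys : ℕ → Fin d → ℤ}
    (hys : ∀ j, 1 ≤ j → j < K → (ys j, ys (j + 1)) ∈ Rn) {b : Fin d → ℤ} (hb : 0 ≤ b)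
    {j k : ℕ} (hj : 1 ≤ j) (hjk : j ≤ k) (hk : k ≤ K) :
    Reachable d Rn (b + ys j) (b + ys k) := by
  induction k, hjk using Nat.le_induction with
  | base => exact .refl
  | succ k hjk ih =>
    exact (ih (by omega)).tail (reactStep_add_of_mem (hys k (by omega) (by omega)) hb)

theorem ReactStep.reachable_reverse (hwr : WeaklyReversible d Rn) {a b : Fin d → ℤ}
    (h : ReactStep d Rn a b) : Reachable d Rn b a := by
  obtain ⟨r, hr, hle, rfl⟩ := h
  obtain ⟨K, ys, hK, h1, h2, hys, hlast⟩ := hwr r hr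
  have hb : 0 ≤ a - r.1 := sub_nonneg.2 hle
  have hcycle : Reachable d Rn (a - r.1 + ys 2) (a - r.1 + ys 1) :=
    (reachable_add_chain hys hb (by omega) hK le_rfl).tail
      (reactStep_add_of_mem hlast hb)
  rw [h1, h2, sub_add_cancel] at hcycle
  convert hcycle using 1
  ext i
  simp only [Pi.add_apply, Pi.sub_apply]
  ring

theorem Reachable.symm (hwr : WeaklyReversible d Rn) {a b : Fin d → ℤ}
    (h : Reachable d Rn a b) : Reachable d Rn b a := by
  induction h with
  | refl => exact .refl
  | tail _ hbc ih => exact (hbc.reachable_reverse hwr).trans ih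

theorem reachable_add_sum_of_sum_fst_le (hRn : IsRN d Rn)
    {L : List ((Fin d → ℤ) × (Fin d → ℤ))} (hL : ∀ r ∈ L, r ∈ Rn) {u : Fin d → ℤ}
    (hu : (L.map Prod.fst).sum ≤ u) :
    Reachable d Rn u (u + (L.map fun r => r.2 - r.1).sum) := by
  induction L generalizing u with
  | nil => rw [List.map_nil, List.sum_nil, add_zero]; exact .refl
  | cons r L ih =>
    have hr : r ∈ Rn := hL r List.mem_cons_self
    have hL' : ∀ r' ∈ L, r' ∈ Rn := fun r' hr' => hL r' (List.mem_cons_of_mem r hr')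
    obtain ⟨-, hprod, -⟩ := hRn r hr
    simp only [List.map_cons, List.sum_cons] at hu ⊢
    have hsum_nonneg : 0 ≤ (L.map Prod.fst).sum :=
      List.sum_nonneg fun y hy => by
        obtain ⟨r', hr', rfl⟩ := List.mem_map.1 hy
        exact (hRn r' (hL' r' hr')).1
    have hstep := reactStep_of_mem hr ((le_add_of_nonneg_right hsum_nonneg).trans hu)
    have hrest := ih hL' (u := u + (r.2 - r.1))
      (calc (L.map Prod.fst).sum ≤ u - r.1 := le_sub_iff_add_le'.2 hu
        _ ≤ r.2 + (u - r.1) := le_add_of_nonneg_left hprod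
        _ = u + (r.2 - r.1) := by abel)
    rw [← add_assoc]
    exact hrest.head hstep

end Reachability

theorem stmt12_general {d : ℕ}
    (Rn : Finset ((Fin d → ℤ) × (Fin d → ℤ))) (hRn : IsRN d Rn)
    (hwr : WeaklyReversible d Rn)
    (z w : Fin d → ℤ) (hw : ∀ i, 0 < w i)
    (hreach : Reachable d Rn z (fun i => z i + w i))
    (c : ((Fin d → ℤ) × (Fin d → ℤ)) → ℕ)
    (hc : ∀ i, 0 ≤ ∑ r ∈ Rn, (c r : ℤ) * (r.2 i - r.1 i)) :
    Reachable d Rn z (fun i => z i + ∑ r ∈ Rn, (c r : ℤ) * (r.2 i - r.1 i)) := by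
  set v : Fin d → ℤ := fun i => ∑ r ∈ Rn, (c r : ℤ) * (r.2 i - r.1 i)
  obtain ⟨L, hL, hLv⟩ :
      ∃ L : List _, (∀ r ∈ L, r ∈ Rn) ∧ (L.map fun r => r.2 - r.1).sum = v := by
    obtain ⟨L, hL, hsum⟩ := exists_list_sum_map_eq_sum_nsmul Rn c fun r => r.2 - r.1
    exact ⟨L, hL, by ext i; simp [hsum, v, Finset.sum_apply]⟩
  obtain ⟨n, hn⟩ := exists_le_add_nsmul (L.map Prod.fst).sum z w hw
  have hup : Reachable d Rn z (z + n • w) := hreach.add_nsmul (fun i => (hw i).le) n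
  have hfire : Reachable d Rn (z + n • w) (z + n • w + v) :=
    hLv ▸ reachable_add_sum_of_sum_fst_le hRn hL hn
  exact hup.trans (hfire.trans ((hup.add_right hc).symm hwr))

/-- Accessibility lemma: in a weakly reversible network, if `z + w` with `w > 0` is reachable
from `z`, then `z + Σ_r d^r (y'_r - y_r)` is reachable from `z` for any nonnegative integers
`d^r` whose net effect is nonnegative. -/
theorem stmt12 {d : ℕ} (hd : 1 ≤ d)
    (Rn : Finset ((Fin d → ℤ) × (Fin d → ℤ))) (hRn : IsRN d Rn)
    (hwr : WeaklyReversible d Rn)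
    (z w : Fin d → ℤ) (hz : ∀ i, 0 ≤ z i) (hw : ∀ i, 0 < w i)
    (hreach : Reachable d Rn z (fun i => z i + w i))
    (c : ((Fin d → ℤ) × (Fin d → ℤ)) → ℕ)
    (hc : ∀ i, 0 ≤ ∑ r ∈ Rn, (c r : ℤ) * (r.2 i - r.1 i)) :
    Reachable d Rn z (fun i => z i + ∑ r ∈ Rn, (c r : ℤ) * (r.2 i - r.1 i)) :=
  stmt12_general Rn hRn hwr z w hw hreach c hc
end

section
/- Let 𝓡 be a weakly reversible reaction network on d species. For any two states z, w ∈ ℤ^d_{≥0}, if w is reachable from z, then z is reachable from w. -/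
open Filter Finset

/-- Weak reversibility lemma: in a weakly reversible network, reachability is symmetric. -/
theorem stmt14 {d : ℕ} (hd : 1 ≤ d)
    (Rn : Finset ((Fin d → ℤ) × (Fin d → ℤ))) (hRn : IsRN d Rn)
    (hwr : WeaklyReversible d Rn)
    (z w : Fin d → ℤ) (hz : ∀ i, 0 ≤ z i) (hw : ∀ i, 0 ≤ w i)
    (h : Reachable d Rn z w) : Reachable d Rn w z := by
  have key : ∀ a b : Fin d → ℤ, ReactStep d Rn a b → Reachable d Rn b a := by
    rintro a b ⟨r, hr, hle, hb⟩
    obtain ⟨K, ys, hK, h1, h2, hmid, hlast⟩ := hwr r hr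
    set st : ℕ → Fin d → ℤ := fun j i => a i + ys j i - ys 1 i with hst
    have hb2 : b = st 2 := by
      funext i; rw [hb]; simp only [hst, h1, h2]; ring
    have hreach : ∀ j, 2 ≤ j → j ≤ K → Reachable d Rn b (st j) := by
      intro j hj2 hjK
      induction j with
      | zero => omega
      | succ n ih =>
        rcases Nat.lt_or_ge 2 (n + 1) with hlt | hge
        · have hn : 2 ≤ n := by omega
          refine Relation.ReflTransGen.tail (ih hn (by omega)) ?_
          refine ⟨(ys n, ys (n + 1)), hmid n (by omega) (by omega), ?_, ?_⟩
          · intro i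
            have := hle i
            have := h1 ▸ this
            simp only [hst]
            have : r.1 i ≤ a i := hle i
            have h1i : ys 1 i = r.1 i := by rw [h1]
            simp only [h1i]
            linarith
          · funext i; simp only [hst]; ring
        · have : n + 1 = 2 := by omega
          rw [this, ← hb2]; exact Relation.ReflTransGen.refl
    have hfin : ReactStep d Rn (st K) a := by
      refine ⟨(ys K, ys 1), hlast, ?_, ?_⟩
      · intro i
        simp only [hst]
        have h1i : ys 1 i = r.1 i := by rw [h1]
        have := hle i
        linarith [hle i, h1i ▸ hle i]
      · funext i; simp only [hst]; ring
    exact Relation.ReflTransGen.tail (hreach K hK le_rfl) hfin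
  clear hw
  induction h with
  | refl => exact Relation.ReflTransGen.refl
  | tail _ hstep ih => exact (key _ _ hstep).trans ih
end
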